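/- Let G be a finite simple graph and let n ≥ 2 be a natural number. Then G[Kₙ] is isomorphic to Kₙ[G] if and only if G is a complete graph, where Kₙ denotes the complete graph on n vertices. -/

import Mathlib

/-!
Complementation commutes with the lexicographic product, `(G[H])ᶜ = Gᶜ[Hᶜ]`, so an isomorphism
`G[Kₙ] ≃ Kₙ[G]` gives `Gᶜ[Eₙ] ≃ Eₙ[Gᶜ]`, with `Eₙ` the edgeless graph. Each dart of `Gᶜ` yields
`n²` darts of `Gᶜ[Eₙ]` but only `n` darts of `Eₙ[Gᶜ]`, so for `n ≥ 2` the complement has no darts.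
-/

/-- The lexicographic product `G[H]` of two simple graphs: `(a, x)` is adjacent to
`(b, y)` iff `a` is adjacent to `b` in `G`, or `a = b` and `x` is adjacent to `y` in `H`. -/
def lexProd {α β : Type*} (G : SimpleGraph α) (H : SimpleGraph β) :
    SimpleGraph (α × β) where
  Adj p q := G.Adj p.1 q.1 ∨ (p.1 = q.1 ∧ H.Adj p.2 q.2)
  symm := by
    constructor
    rintro ⟨a, x⟩ ⟨b, y⟩ (h | ⟨rfl, h⟩)
    · exact Or.inl h.symm
    · exact Or.inr ⟨rfl, h.symm⟩
  loopless := by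
    constructor
    rintro ⟨a, x⟩ (h | ⟨-, h⟩)
    · exact G.irrefl h
    · exact H.irrefl h

namespace SimpleGraph

variable {V W : Type*} {G : SimpleGraph V} {H : SimpleGraph W}

def Iso.compl (f : G ≃g H) : Gᶜ ≃g Hᶜ where
  toEquiv := f.toEquiv
  map_rel_iff' := by simp [compl_adj, f.map_adj_iff]

def Iso.dartEquiv (f : G ≃g H) : G.Dart ≃ H.Dart where
  toFun := f.toHom.mapDart
  invFun := f.symm.toHom.mapDart
  left_inv d := by ext <;> simp [Hom.mapDart_apply]
  right_inv d := by ext <;> simp [Hom.mapDart_apply]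

theorem eq_bot_of_nat_card_dart_eq_zero [Finite V] (h : Nat.card G.Dart = 0) : G = ⊥ := by
  have : Finite G.Dart := .of_injective _ Dart.toProd_injective
  have : IsEmpty G.Dart := Finite.card_eq_zero_iff.mp h
  ext v w
  exact iff_of_false (fun hvw ↦ isEmptyElim (⟨(v, w), hvw⟩ : G.Dart)) id

end SimpleGraph

open SimpleGraph

section

variable {α β : Type*}

theorem lexProd_compl (G : SimpleGraph α) (H : SimpleGraph β) :
    (lexProd G H)ᶜ = lexProd Gᶜ Hᶜ := by
  ext ⟨a, x⟩ ⟨b, y⟩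
  simp only [compl_adj, lexProd, ne_eq, Prod.mk.injEq]
  by_cases hab : a = b
  · subst hab; simp
  · simp [hab]

theorem lexProd_top_top : lexProd (⊤ : SimpleGraph α) (⊤ : SimpleGraph β) = ⊤ := by
  ext ⟨a, x⟩ ⟨b, y⟩
  simp only [lexProd, top_adj, ne_eq, Prod.mk.injEq]
  tauto

def lexProdBotDartEquiv (G : SimpleGraph α) :
    (lexProd G (⊥ : SimpleGraph β)).Dart ≃ G.Dart × (β × β) where
  toFun d := (⟨(d.fst.1, d.snd.1), d.adj.resolve_right And.right⟩, (d.fst.2, d.snd.2))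
  invFun p := ⟨((p.1.fst, p.2.1), (p.1.snd, p.2.2)), Or.inl p.1.adj⟩
  left_inv _ := rfl
  right_inv _ := rfl

def botLexProdDartEquiv (H : SimpleGraph β) :
    (lexProd (⊥ : SimpleGraph α) H).Dart ≃ α × H.Dart where
  toFun d := (d.fst.1, ⟨(d.fst.2, d.snd.2), (d.adj.resolve_left id).2⟩)
  invFun p := ⟨((p.1, p.2.fst), (p.1, p.2.snd)), Or.inr ⟨rfl, p.2.adj⟩⟩
  left_inv d := by
    obtain ⟨⟨⟨a, x⟩, ⟨b, y⟩⟩, h⟩ := d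
    obtain rfl : a = b := (h.resolve_left id).1
    rfl
  right_inv _ := rfl

theorem eq_bot_of_lexProd_bot_iso [Finite α] [Finite β] [Nontrivial β]
    {G : SimpleGraph α} (f : lexProd G (⊥ : SimpleGraph β) ≃g lexProd (⊥ : SimpleGraph β) G) :
    G = ⊥ := by
  have hcard : Nat.card G.Dart * (Nat.card β * Nat.card β) = Nat.card β * Nat.card G.Dart := by
    simpa [Nat.card_prod] using Nat.card_congr
      ((lexProdBotDartEquiv G).symm.trans (f.dartEquiv.trans (botLexProdDartEquiv G)))
  have hβ : 1 < Nat.card β := Finite.one_lt_card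
  refine eq_bot_of_nat_card_dart_eq_zero (Nat.eq_zero_of_not_pos fun hG ↦ ?_)
  have : Nat.card β * Nat.card β = Nat.card β := Nat.eq_of_mul_eq_mul_left hG (by linarith)
  nlinarith

end

/-- For `n ≥ 2`, `G[Kₙ] ≅ Kₙ[G]` if and only if `G` is a complete graph. -/
theorem lexProd_top_comm_iff {α : Type*} [Fintype α] (G : SimpleGraph α) (n : ℕ)
    (hn : 2 ≤ n) :
    Nonempty (lexProd G (⊤ : SimpleGraph (Fin n)) ≃g lexProd (⊤ : SimpleGraph (Fin n)) G) ↔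
      G = ⊤ := by
  constructor
  · rintro ⟨f⟩
    have f' : lexProd Gᶜ (⊥ : SimpleGraph (Fin n)) ≃g lexProd (⊥ : SimpleGraph (Fin n)) Gᶜ := by
      simpa only [lexProd_compl, compl_top] using f.compl
    have : Nontrivial (Fin n) := Fin.nontrivial_iff_two_le.mpr hn
    exact compl_eq_bot.mp (eq_bot_of_lexProd_bot_iso f')
  · rintro rfl
    rw [lexProd_top_top, lexProd_top_top]
    exact ⟨Iso.completeGraph (Equiv.prodComm _ _)⟩
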